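/- arXiv:math/0603430 — 2 statements merged into one kernel-verified Lean document; each statement's English description precedes it below -/
import Mathlib

section
/- Let d ≥ 1 be an integer, R > 0, and let K : [0,∞) → ℝ be a bounded, nonnegative, measurable function supported in [0,R]. For j ≥ 1 set m_{K,j} := ∫₀^R s^{j−1} K(s) ds and assume m_{K,d} > 0; define the kernel moment ratios B_p := m_{K,d+p}/m_{K,d}. Set c₁ᵈ = 2d, c₂ᵈ = 8d², c₃ᵈ = 4d(d−1). Let F : [0,∞) → ℝ be continuous with F(t) = τ₂ t² + τ₄ t⁴ + τ₆ t⁶ + o(t⁶) as t → 0⁺, define the kernel average I_F(h) := (∫₀^R u^{d−1} K(u) F(hu) du)/m_{K,d}, the sample-side curvature combination Ψ_F(h) := c₂ᵈ I_F(h) − c₃ᵈ I_F(√2 h) − c₁ᵈ I_F(2h), and the stochastic curvature combination φ₂(a) := c₂ᵈ F(a) − c₃ᵈ F(√2 a) − c₁ᵈ F(2a). Then, as h → 0⁺, Ψ_F(h) − φ₂(B₄^{1/4} h) = −24 d (d+4) τ₆ (B₆ − B₄^{3/2}) h⁶ + o(h⁶); in particular the O(h²) and O(h⁴) terms cancel and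 the curvature combination is asymptotically unbiased. -/
/-!
Expanding `F = τ₂ t² + τ₄ t⁴ + τ₆ t⁶ + o(t⁶)` inside the kernel average gives
`I_F(h) = τ₂ B₂ h² + τ₄ B₄ h⁴ + τ₆ B₆ h⁶ + o(h⁶)`. The curvature combination
`f ↦ c₂ᵈ f(a) − c₃ᵈ f(√2 a) − c₁ᵈ f(2a)` annihilates `t²` and multiplies `t⁴`, `t⁶` by
`−8d(d+2)` and `−24d(d+4)`. Hence in `Ψ_F(h) − φ₂(b h)` the `h⁴` term carries the factor
`B₄ − b⁴`, which vanishes for `b = B₄^{1/4}`, and only `−24d(d+4) τ₆ (B₆ − b⁶) h⁶` survives.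
The remainders stay `o(h⁶)` after the rescaling `h ↦ b h` because `b > 0`: `m_{K,d} > 0` means
`K` has positive mass on `(0, R]`, hence so does `s^{d+3} K(s)`.
-/

open MeasureTheory Filter Topology Asymptotics Set

theorem Asymptotics.IsLittleO.comp_const_mul_nhdsGT {E : Type*} [NormedAddCommGroup E]
    {f : ℝ → E} {n : ℕ} {c : ℝ} (hc : 0 < c) (hf : f =o[𝓝[>] 0] (· ^ n)) :
    (fun h => f (c * h)) =o[𝓝[>] 0] (· ^ n) := by
  have hscale : Tendsto (c * ·) (𝓝[>] (0 : ℝ)) (𝓝[>] 0) := by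
    simpa using Filter.TendstoNhdsWithinIoi.const_mul (c := (0 : ℝ)) hc tendsto_id
  have := hf.comp_tendsto hscale
  simp only [Function.comp_def, mul_pow] at this
  exact (isLittleO_const_mul_right_iff (pow_ne_zero n hc.ne')).mp this

/-- With `f = F` this is the paper's `φ₂`, with `f = I_F` it is `Ψ_F`. -/
noncomputable def curvatureComb (d : ℕ) (f : ℝ → ℝ) (a : ℝ) : ℝ :=
  8 * (d : ℝ) ^ 2 * f a - 4 * (d : ℝ) * ((d : ℝ) - 1) * f (Real.sqrt 2 * a)
    - 2 * (d : ℝ) * f (2 * a)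

theorem curvatureComb_sub (d : ℕ) (f g : ℝ → ℝ) (a : ℝ) :
    curvatureComb d (fun t => f t - g t) a = curvatureComb d f a - curvatureComb d g a := by
  unfold curvatureComb; ring

theorem curvatureComb_evenSextic (d : ℕ) (α β γ a : ℝ) :
    curvatureComb d (fun t => α * t ^ 2 + β * t ^ 4 + γ * t ^ 6) a
      = -(8 * (d : ℝ) * (d + 2)) * β * a ^ 4 - 24 * (d : ℝ) * (d + 4) * γ * a ^ 6 := by
  have h2 : Real.sqrt 2 ^ 2 = 2 := Real.sq_sqrt zero_le_two
  have h4 : Real.sqrt 2 ^ 4 = 4 := by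
    rw [show Real.sqrt 2 ^ 4 = (Real.sqrt 2 ^ 2) ^ 2 by ring, h2]; norm_num
  have h6 : Real.sqrt 2 ^ 6 = 8 := by
    rw [show Real.sqrt 2 ^ 6 = (Real.sqrt 2 ^ 2) ^ 3 by ring, h2]; norm_num
  simp only [curvatureComb, mul_pow, h2, h4, h6]
  ring

theorem curvatureComb_isLittleO {d n : ℕ} {f : ℝ → ℝ} (hf : f =o[𝓝[>] 0] (· ^ n)) :
    curvatureComb d f =o[𝓝[>] 0] (· ^ n) :=
  ((hf.const_mul_left _).sub
    ((hf.comp_const_mul_nhdsGT (Real.sqrt_pos.mpr two_pos)).const_mul_left _)).sub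
    ((hf.comp_const_mul_nhdsGT two_pos).const_mul_left _)

theorem intervalIntegral.integral_mul_comp_isLittleO {w r : ℝ → ℝ} {R : ℝ} {n : ℕ}
    (hR : 0 ≤ R) (hw : IntervalIntegrable w volume 0 R) (hr : r =o[𝓝[>] 0] (· ^ n)) :
    (fun h => ∫ u in (0 : ℝ)..R, w u * r (h * u)) =o[𝓝[>] 0] (· ^ n) := by
  set C := R ^ n * ∫ u in (0 : ℝ)..R, |w u|
  have hC : 0 ≤ C := mul_nonneg (pow_nonneg hR n)
    (intervalIntegral.integral_nonneg hR fun u _ => abs_nonneg (w u))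
  refine isLittleO_iff.mpr fun ε hε => ?_
  have hε' : 0 < ε / (C + 1) := by positivity
  obtain ⟨δ, hδ, hrδ⟩ := (nhdsGT_basis (0 : ℝ)).eventually_iff.mp (hr.def hε')
  filter_upwards [Ioo_mem_nhdsGT (show (0 : ℝ) < δ / (R + 1) by positivity)] with h ⟨hh0, hhδ⟩
  have hbound : ∀ u ∈ Ioc (0 : ℝ) R,
      ‖w u * r (h * u)‖ ≤ ε / (C + 1) * h ^ n * (R ^ n * |w u|) := by
    rintro u ⟨hu0, huR⟩
    have hhu : h * u < δ := calc
      h * u ≤ h * (R + 1) := by nlinarith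
      _ < δ := (lt_div_iff₀ (by linarith)).mp hhδ
    have hr_hu := hrδ ⟨mul_pos hh0 hu0, hhu⟩
    rw [norm_pow, Real.norm_of_nonneg (mul_pos hh0 hu0).le] at hr_hu
    calc ‖w u * r (h * u)‖ = |w u| * ‖r (h * u)‖ := by rw [norm_mul, Real.norm_eq_abs]
      _ ≤ |w u| * (ε / (C + 1) * (h * R) ^ n) := by
          gcongr; exact hr_hu.trans (by gcongr)
      _ = ε / (C + 1) * h ^ n * (R ^ n * |w u|) := by ring
  calc ‖∫ u in (0 : ℝ)..R, w u * r (h * u)‖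
      ≤ ∫ u in (0 : ℝ)..R, ε / (C + 1) * h ^ n * (R ^ n * |w u|) :=
        intervalIntegral.norm_integral_le_of_norm_le hR (ae_of_all _ hbound)
          ((hw.abs.const_mul _).const_mul _)
    _ = ε / (C + 1) * C * ‖h ^ n‖ := by
        rw [intervalIntegral.integral_const_mul, intervalIntegral.integral_const_mul,
          norm_pow, Real.norm_of_nonneg hh0.le]
        ring
    _ ≤ ε * ‖h ^ n‖ := by
        gcongr
        rw [div_mul_eq_mul_div, div_le_iff₀ (by linarith)]
        nlinarith

theorem Measurable.intervalIntegrable_of_norm_le {f : ℝ → ℝ} (hf : Measurable f) {M : ℝ}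
    (hM : ∀ x, ‖f x‖ ≤ M) (a b : ℝ) : IntervalIntegrable f volume a b :=
  intervalIntegrable_iff.mpr <|
    IntegrableOn.of_bound measure_Ioc_lt_top hf.aestronglyMeasurable M (ae_of_all _ hM)

theorem intervalIntegral.integral_pow_mul_pos_iff {K : ℝ → ℝ} {R : ℝ} (hR : 0 ≤ R)
    (hK : ∀ s, 0 ≤ K s) (hKint : IntervalIntegrable K volume 0 R) (p : ℕ) :
    0 < ∫ s in (0 : ℝ)..R, s ^ p * K s ↔ 0 < volume (Function.support K ∩ Ioc 0 R) := by
  have hint : IntegrableOn (fun s => s ^ p * K s) (Ioc 0 R) :=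
    ((intervalIntegrable_iff_integrableOn_Ioc_of_le hR).mp
      (hKint.continuousOn_mul (continuous_pow p).continuousOn))
  have hnonneg : 0 ≤ᵐ[volume.restrict (Ioc 0 R)] fun s => s ^ p * K s :=
    (ae_restrict_iff' measurableSet_Ioc).mpr
      (ae_of_all _ fun s hs => mul_nonneg (pow_nonneg hs.1.le p) (hK s))
  rw [intervalIntegral.integral_of_le hR,
    setIntegral_pos_iff_support_of_nonneg_ae hnonneg hint]
  congr! 2
  ext s
  simp only [mem_inter_iff, Function.mem_support, mem_Ioc]
  exact and_congr_left fun hs => by simp [hs.1.ne']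

theorem intervalIntegral.integral_mul_evenSextic {w : ℝ → ℝ} {a b : ℝ}
    (hw : IntervalIntegrable w volume a b) (α β γ h : ℝ) :
    ∫ u in a..b, w u * (α * (h * u) ^ 2 + β * (h * u) ^ 4 + γ * (h * u) ^ 6)
      = α * h ^ 2 * (∫ u in a..b, w u * u ^ 2) + β * h ^ 4 * (∫ u in a..b, w u * u ^ 4)
        + γ * h ^ 6 * (∫ u in a..b, w u * u ^ 6) := by
  have hmom (k : ℕ) : IntervalIntegrable (fun u => w u * u ^ k) volume a b :=
    hw.mul_continuousOn (continuous_pow k).continuousOn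
  have hsplit : (fun u => w u * (α * (h * u) ^ 2 + β * (h * u) ^ 4 + γ * (h * u) ^ 6))
      = fun u => α * h ^ 2 * (w u * u ^ 2) + β * h ^ 4 * (w u * u ^ 4)
        + γ * h ^ 6 * (w u * u ^ 6) := by
    ext u; ring
  rw [hsplit, intervalIntegral.integral_add (((hmom 2).const_mul _).add ((hmom 4).const_mul _))
      ((hmom 6).const_mul _), intervalIntegral.integral_add ((hmom 2).const_mul _)
      ((hmom 4).const_mul _), intervalIntegral.integral_const_mul,
    intervalIntegral.integral_const_mul, intervalIntegral.integral_const_mul]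

theorem intervalIntegral.integral_mul_comp_sub_isLittleO {w f g : ℝ → ℝ} {R : ℝ} {n : ℕ}
    (hR : 0 ≤ R) (hw : IntervalIntegrable w volume 0 R) (hf : ContinuousOn f (Ici 0))
    (hg : ContinuousOn g (Ici 0)) (hfg : (fun t => f t - g t) =o[𝓝[>] 0] (· ^ n)) :
    (fun h => (∫ u in (0 : ℝ)..R, w u * f (h * u)) - ∫ u in (0 : ℝ)..R, w u * g (h * u))
      =o[𝓝[>] 0] (· ^ n) := by
  refine (intervalIntegral.integral_mul_comp_isLittleO hR hw hfg).congr'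
    ?_ EventuallyEq.rfl
  filter_upwards [self_mem_nhdsWithin] with h (hh : 0 < h)
  have hmaps : MapsTo (h * ·) (uIcc 0 R) (Ici 0) := by
    rw [uIcc_of_le hR]
    exact fun u hu => mul_nonneg hh.le hu.1
  have hint {φ : ℝ → ℝ} (hφ : ContinuousOn φ (Ici 0)) :
      IntervalIntegrable (fun u => w u * φ (h * u)) volume 0 R :=
    hw.mul_continuousOn (hφ.comp (continuous_const_mul h).continuousOn hmaps)
  simp only [mul_sub]
  exact intervalIntegral.integral_sub (hint hf) (hint hg)

theorem intervalIntegral.integral_pow_pred_mul_mul_pow (K : ℝ → ℝ) (a b : ℝ) {d : ℕ}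
    (hd : 1 ≤ d) (k : ℕ) :
    ∫ u in a..b, u ^ (d - 1) * K u * u ^ k = ∫ u in a..b, u ^ (d + k - 1) * K u := by
  congr 1
  ext u
  rw [show d + k - 1 = d - 1 + k by omega, pow_add]
  ring

theorem stmt_13_general (d : ℕ) (hd : 1 ≤ d) (R : ℝ) (hR : 0 < R)
    (K : ℝ → ℝ) (hKmeas : Measurable K) (hKnonneg : ∀ s, 0 ≤ K s)
    (hKbdd : ∃ M, ∀ s, K s ≤ M)
    (mK : ℕ → ℝ) (hmK : ∀ j, mK j = ∫ s in (0:ℝ)..R, s ^ (j - 1) * K s)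
    (hmKd : 0 < mK d)
    (B : ℕ → ℝ) (hB : ∀ p, B p = mK (d + p) / mK d)
    (c1 c2 c3 : ℝ) (hc1 : c1 = 2 * (d : ℝ)) (hc2 : c2 = 8 * (d : ℝ) ^ 2)
    (hc3 : c3 = 4 * (d : ℝ) * ((d : ℝ) - 1))
    (F : ℝ → ℝ) (hFcont : ContinuousOn F (Set.Ici 0))
    (τ₂ τ₄ τ₆ : ℝ)
    (hF : (fun t => F t - (τ₂ * t ^ 2 + τ₄ * t ^ 4 + τ₆ * t ^ 6))
      =o[𝓝[>] (0:ℝ)] fun t => t ^ 6)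
    (IF : ℝ → ℝ)
    (hIF : ∀ h, IF h = (∫ u in (0:ℝ)..R, u ^ (d - 1) * K u * F (h * u)) / mK d)
    (Ψ : ℝ → ℝ)
    (hΨ : ∀ h, Ψ h = c2 * IF h - c3 * IF (Real.sqrt 2 * h) - c1 * IF (2 * h))
    (φ₂ : ℝ → ℝ)
    (hφ₂ : ∀ a, φ₂ a = c2 * F a - c3 * F (Real.sqrt 2 * a) - c1 * F (2 * a)) :
    (fun h => Ψ h - φ₂ ((B 4) ^ ((1:ℝ)/4) * h)
        - (-(24 * (d : ℝ) * ((d : ℝ) + 4)) * τ₆ * (B 6 - (B 4) ^ ((3:ℝ)/2)) * h ^ 6))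
      =o[𝓝[>] (0:ℝ)] fun h => h ^ 6 := by
  subst hc1 hc2 hc3
  obtain ⟨M, hM⟩ := hKbdd
  have hKint : IntervalIntegrable K volume 0 R := hKmeas.intervalIntegrable_of_norm_le
    (fun s => (Real.norm_of_nonneg (hKnonneg s)).trans_le (hM s)) 0 R
  have hw : IntervalIntegrable (fun u => u ^ (d - 1) * K u) volume 0 R :=
    hKint.continuousOn_mul (continuous_pow _).continuousOn
  have hmoment (k : ℕ) :
      ∫ u in (0 : ℝ)..R, u ^ (d - 1) * K u * u ^ k = mK (d + k) := by
    rw [hmK, intervalIntegral.integral_pow_pred_mul_mul_pow K 0 R hd k]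
  have hB4 : 0 < B 4 := by
    rw [hB, hmK]
    refine div_pos ?_ hmKd
    rw [hmK, intervalIntegral.integral_pow_mul_pos_iff hR.le hKnonneg hKint] at hmKd
    rwa [intervalIntegral.integral_pow_mul_pos_iff hR.le hKnonneg hKint]
  set b := B 4 ^ ((1 : ℝ) / 4)
  have hb : 0 < b := by positivity
  have hb4 : b ^ 4 = B 4 := by
    rw [← Real.rpow_natCast, ← Real.rpow_mul hB4.le]; norm_num
  have hb6 : b ^ 6 = B 4 ^ ((3 : ℝ) / 2) := by
    rw [← Real.rpow_natCast, ← Real.rpow_mul hB4.le]; norm_num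
  set P : ℝ → ℝ := fun t => τ₂ * t ^ 2 + τ₄ * t ^ 4 + τ₆ * t ^ 6
  set PB : ℝ → ℝ := fun t => τ₂ * B 2 * t ^ 2 + τ₄ * B 4 * t ^ 4 + τ₆ * B 6 * t ^ 6
  have hIF_sub : (fun h => IF h - PB h) =o[𝓝[>] 0] (· ^ 6) := by
    refine ((intervalIntegral.integral_mul_comp_sub_isLittleO hR.le hw hFcont
      (by fun_prop) hF).const_mul_left (mK d)⁻¹).congr_left fun h => ?_
    simp only [hIF, PB, intervalIntegral.integral_mul_evenSextic hw, hmoment, hB]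
    field_simp
  have hkey (h : ℝ) : Ψ h - φ₂ (b * h)
        - (-(24 * (d : ℝ) * ((d : ℝ) + 4)) * τ₆ * (B 6 - B 4 ^ ((3 : ℝ) / 2)) * h ^ 6)
      = curvatureComb d (fun t => IF t - PB t) h
        - curvatureComb d (fun t => F t - P t) (b * h) := by
    rw [curvatureComb_sub, curvatureComb_sub, curvatureComb_evenSextic, curvatureComb_evenSextic,
      hΨ, hφ₂, mul_pow, mul_pow, hb4, hb6]
    unfold curvatureComb
    ring
  rw [funext hkey]
  exact (curvatureComb_isLittleO hIF_sub).sub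
    ((curvatureComb_isLittleO hF).comp_const_mul_nhdsGT hb)

/-- Mean of the sample curvature constraint, differentiable case: the `O(h²)` and `O(h⁴)`
terms cancel and `Ψ_F(h) − φ₂(B₄^{1/4} h) = −24 d (d+4) τ₆ (B₆ − B₄^{3/2}) h⁶ + o(h⁶)`
as `h → 0⁺`. -/
theorem stmt_13 (d : ℕ) (hd : 1 ≤ d) (R : ℝ) (hR : 0 < R)
    (K : ℝ → ℝ) (hKmeas : Measurable K) (hKnonneg : ∀ s, 0 ≤ K s)
    (hKbdd : ∃ M, ∀ s, K s ≤ M)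
    (hKsupp : ∀ s, R < s → K s = 0)
    (mK : ℕ → ℝ) (hmK : ∀ j, mK j = ∫ s in (0:ℝ)..R, s ^ (j - 1) * K s)
    (hmKd : 0 < mK d)
    (B : ℕ → ℝ) (hB : ∀ p, B p = mK (d + p) / mK d)
    (c1 c2 c3 : ℝ) (hc1 : c1 = 2 * (d : ℝ)) (hc2 : c2 = 8 * (d : ℝ) ^ 2)
    (hc3 : c3 = 4 * (d : ℝ) * ((d : ℝ) - 1))
    (F : ℝ → ℝ) (hFcont : ContinuousOn F (Set.Ici 0))
    (τ₂ τ₄ τ₆ : ℝ)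
    (hF : (fun t => F t - (τ₂ * t ^ 2 + τ₄ * t ^ 4 + τ₆ * t ^ 6))
      =o[𝓝[>] (0:ℝ)] fun t => t ^ 6)
    (IF : ℝ → ℝ)
    (hIF : ∀ h, IF h = (∫ u in (0:ℝ)..R, u ^ (d - 1) * K u * F (h * u)) / mK d)
    (Ψ : ℝ → ℝ)
    (hΨ : ∀ h, Ψ h = c2 * IF h - c3 * IF (Real.sqrt 2 * h) - c1 * IF (2 * h))
    (φ₂ : ℝ → ℝ)
    (hφ₂ : ∀ a, φ₂ a = c2 * F a - c3 * F (Real.sqrt 2 * a) - c1 * F (2 * a)) :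
    (fun h => Ψ h - φ₂ ((B 4) ^ ((1:ℝ)/4) * h)
        - (-(24 * (d : ℝ) * ((d : ℝ) + 4)) * τ₆ * (B 6 - (B 4) ^ ((3:ℝ)/2)) * h ^ 6))
      =o[𝓝[>] (0:ℝ)] fun h => h ^ 6 :=
  stmt_13_general d hd R hR K hKmeas hKnonneg hKbdd mK hmK hmKd B hB c1 c2 c3 hc1 hc2 hc3 F hFcont
    τ₂ τ₄ τ₆ hF IF hIF Ψ hΨ φ₂ hφ₂
end

section
/- Let d ≥ 1 be an integer, R > 0, and let K : [0,∞) → ℝ be a bounded, nonnegative, measurable function supported in [0,R]. For j ≥ 1 set m_{K,j} := ∫₀^R s^{j−1} K(s) ds and assume m_{K,d} > 0; define the kernel moment ratios B_p := m_{K,d+p}/m_{K,d}. Set c₁ᵈ = 2d, c₂ᵈ = 8d², c₃ᵈ = 4d(d−1). Let F : [0,∞) → ℝ be continuous with F(t) = τ₁ t + τ₂ t² + τ₃ t³ + o(t³) as t → 0⁺ and τ₁ > 0; define I_F(h) := (∫₀^R u^{d−1} K(u) F(hu) du)/m_{K,d}, Ψ_F(h) := c₂ᵈ I_F(h) − c₃ᵈ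 I_F(√2 h) − c₁ᵈ I_F(2h), and φ₂(a) := c₂ᵈ F(a) − c₃ᵈ F(√2 a) − c₁ᵈ F(2a). Then the relative bias (Ψ_F(h) − φ₂(B₄^{1/4} h)) / φ₂(B₄^{1/4} h) converges, as h → 0⁺, to (B₁ − B₄^{1/4}) / B₄^{1/4}. -/
/-!
The expansion of `F` gives `F t = τ₁ t + o(t)` as `t → 0⁺`.
Then `F(at)/t → a τ₁` for every `a > 0`, and, integrating `F(hu)` against the weight
`u^{d-1} K(u)`, `I_F(h)/h → τ₁ B₁`. Hence both `Ψ_F(h)/h` and `φ₂(B₄^{1/4} h)/h` converge, to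
`c₄ τ₁ B₁` and `c₄ τ₁ B₄^{1/4}` respectively, where `c₄ = c₂ − √2 c₃ − 2 c₁ = 4d((2−√2)d + √2 − 1) > 0`,
and the relative bias tends to the quotient of the differences of these limits.
-/

open MeasureTheory Filter Topology Asymptotics Set

theorem isLittleO_sub_linear_of_isLittleO_cubic {F : ℝ → ℝ} {τ₁ τ₂ τ₃ : ℝ}
    (hF : (fun t => F t - (τ₁ * t + τ₂ * t ^ 2 + τ₃ * t ^ 3)) =o[𝓝[>] (0:ℝ)] fun t => t ^ 3) :
    (fun t => F t - τ₁ * t) =o[𝓝[>] (0:ℝ)] fun t => t := by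
  have hpow : ∀ n, 1 < n → (fun t : ℝ => t ^ n) =o[𝓝[>] (0:ℝ)] fun t => t := fun n hn => by
    simpa using (isLittleO_pow_pow (𝕜 := ℝ) hn).mono nhdsWithin_le_nhds
  refine ((hF.trans (hpow 3 (by norm_num))).add (((hpow 2 (by norm_num)).const_mul_left τ₂).add
    ((hpow 3 (by norm_num)).const_mul_left τ₃))).congr_left fun t => ?_
  ring

theorem tendsto_div_self_of_isLittleO {G : ℝ → ℝ} {L : ℝ}
    (hG : (fun t => G t - L * t) =o[𝓝[>] (0:ℝ)] fun t => t) :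
    Tendsto (fun t => G t / t) (𝓝[>] 0) (𝓝 L) := by
  have h := hG.tendsto_div_nhds_zero.add_const L
  rw [zero_add] at h
  refine h.congr' ?_
  filter_upwards [self_mem_nhdsWithin] with t (ht : 0 < t)
  field_simp
  ring

theorem tendsto_comp_const_mul_div {G : ℝ → ℝ} {L b : ℝ} (hb : 0 < b)
    (hG : Tendsto (fun t => G t / t) (𝓝[>] 0) (𝓝 L)) :
    Tendsto (fun t => G (b * t) / t) (𝓝[>] 0) (𝓝 (b * L)) := by
  have hmul : Tendsto (fun t => b * t) (𝓝[>] (0:ℝ)) (𝓝[>] 0) :=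
    tendsto_nhdsWithin_of_tendsto_nhds_of_eventually_within _
      (by simpa using ((continuous_const_mul b).tendsto 0).mono_left nhdsWithin_le_nhds)
      (by filter_upwards [self_mem_nhdsWithin] with t (ht : 0 < t) using mul_pos hb ht)
  refine ((hG.comp hmul).const_mul b).congr' ?_
  filter_upwards [self_mem_nhdsWithin] with t (ht : 0 < t)
  simp only [Function.comp_apply]
  field_simp

theorem tendsto_combination_div {G : ℝ → ℝ} {L : ℝ}
    (hG : Tendsto (fun t => G t / t) (𝓝[>] 0) (𝓝 L)) (c₁ c₂ c₃ : ℝ) :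
    Tendsto (fun h => (c₂ * G h - c₃ * G (√2 * h) - c₁ * G (2 * h)) / h) (𝓝[>] 0)
      (𝓝 ((c₂ - √2 * c₃ - 2 * c₁) * L)) := by
  have := ((hG.const_mul c₂).sub
    ((tendsto_comp_const_mul_div (b := √2) (by positivity) hG).const_mul c₃)).sub
    ((tendsto_comp_const_mul_div (b := 2) two_pos hG).const_mul c₁)
  convert this using 2
  · simp only [sub_div, mul_div_assoc]
  · ring

theorem tendsto_sub_div_of_tendsto_div {N D : ℝ → ℝ} {p q : ℝ} {l : Filter ℝ}
    (hN : Tendsto (fun h => N h / h) l (𝓝 p)) (hD : Tendsto (fun h => D h / h) l (𝓝 q))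
    (hq : q ≠ 0) (hl : ∀ᶠ h in l, h ≠ 0) :
    Tendsto (fun h => (N h - D h) / D h) l (𝓝 ((p - q) / q)) := by
  refine ((hN.sub hD).div hD hq).congr' ?_
  filter_upwards [hl] with h hh
  change (N h / h - D h / h) / (D h / h) = _
  rw [← sub_div, div_div_div_cancel_right₀ hh]

theorem curvature_coeff_pos {d : ℝ} (hd : 1 ≤ d) :
    0 < 8 * d ^ 2 - √2 * (4 * d * (d - 1)) - 2 * (2 * d) := by
  have h1 : 1 < √2 := by rw [Real.lt_sqrt] <;> norm_num
  have h2 : √2 < 2 := by rw [Real.sqrt_lt'] <;> norm_num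
  have : 0 < (2 - √2) * d + √2 - 1 := by nlinarith
  calc (0:ℝ) < 4 * d * ((2 - √2) * d + √2 - 1) := by positivity
    _ = _ := by ring

theorem isLittleO_integral_mul_comp {w e : ℝ → ℝ} {R : ℝ} (hR : 0 ≤ R)
    (hw : IntervalIntegrable w volume 0 R) (he : e =o[𝓝[>] (0:ℝ)] fun t => t) :
    (fun h => ∫ u in (0:ℝ)..R, w u * e (h * u)) =o[𝓝[>] (0:ℝ)] fun h => h := by
  refine isLittleO_iff.mpr fun c hc => ?_
  set W := ∫ u in (0:ℝ)..R, |w u|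
  have hW : 0 ≤ W := intervalIntegral.integral_nonneg hR fun _ _ => abs_nonneg _
  set c' := c / (R * W + 1)
  obtain ⟨δ, hδ, hδe⟩ := mem_nhdsGT_iff_exists_Ioo_subset.mp (he.def (by positivity : 0 < c'))
  filter_upwards [Ioo_mem_nhdsGT (div_pos hδ (by positivity : 0 < R + 1))] with h ⟨hh0, hhδ⟩
  have hpoint : ∀ u ∈ Ioc 0 R, ‖w u * e (h * u)‖ ≤ c' * h * R * |w u| := fun u ⟨hu0, huR⟩ => by
    have hhu : h * u ∈ Ioo 0 δ := ⟨by positivity, by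
      rw [lt_div_iff₀ (by positivity)] at hhδ; nlinarith⟩
    have : ‖e (h * u)‖ ≤ c' * ‖h * u‖ := hδe hhu
    rw [Real.norm_eq_abs, Real.norm_eq_abs, abs_of_pos hhu.1] at this
    rw [norm_mul, Real.norm_eq_abs, mul_comm]
    gcongr
    calc |e (h * u)| ≤ c' * (h * u) := this
      _ ≤ c' * h * R := by rw [← mul_assoc]; gcongr
  calc ‖∫ u in (0:ℝ)..R, w u * e (h * u)‖
      ≤ ∫ u in (0:ℝ)..R, c' * h * R * |w u| :=
        intervalIntegral.norm_integral_le_of_norm_le hR (ae_of_all _ hpoint) (hw.abs.const_mul _)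
    _ = c * (R * W / (R * W + 1)) * h := by
        rw [intervalIntegral.integral_const_mul]; ring
    _ ≤ c * ‖h‖ := by
        rw [Real.norm_eq_abs, abs_of_pos hh0, mul_le_mul_iff_left₀ hh0]
        exact mul_le_of_le_one_right hc.le ((div_le_one (by positivity)).mpr (by linarith))

theorem tendsto_integral_mul_comp_div {w F : ℝ → ℝ} {τ R : ℝ} (hR : 0 ≤ R)
    (hw : IntervalIntegrable w volume 0 R) (hFcont : ContinuousOn F (Ici 0))
    (hF : (fun t => F t - τ * t) =o[𝓝[>] (0:ℝ)] fun t => t) :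
    Tendsto (fun h => (∫ u in (0:ℝ)..R, w u * F (h * u)) / h) (𝓝[>] 0)
      (𝓝 (τ * ∫ u in (0:ℝ)..R, u * w u)) := by
  refine tendsto_div_self_of_isLittleO ((isLittleO_integral_mul_comp hR hw hF).congr' ?_
    EventuallyEq.rfl)
  filter_upwards [self_mem_nhdsWithin] with h (hh : 0 < h)
  have hFh : ContinuousOn (fun u => F (h * u)) (uIcc 0 R) :=
    hFcont.comp (continuousOn_const.mul continuousOn_id) fun u hu => by
      rw [uIcc_of_le hR] at hu
      exact mul_nonneg hh.le hu.1
  have hlin : ∀ u, w u * (τ * (h * u)) = τ * h * (u * w u) := fun u => by ring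
  simp only [mul_sub]
  rw [intervalIntegral.integral_sub (hw.mul_continuousOn hFh) (hw.mul_continuousOn (by fun_prop)),
    funext hlin, intervalIntegral.integral_const_mul]
  ring

theorem integral_pow_mul_pos {K : ℝ → ℝ} {R : ℝ} (hR : 0 ≤ R) (hK : ∀ s, 0 ≤ K s)
    (hKi : IntervalIntegrable K volume 0 R) {m : ℕ} (n : ℕ)
    (hm : 0 < ∫ s in (0:ℝ)..R, s ^ m * K s) : 0 < ∫ s in (0:ℝ)..R, s ^ n * K s := by
  have hpos_iff : ∀ k : ℕ, 0 < ∫ s in (0:ℝ)..R, s ^ k * K s ↔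
      0 < R ∧ 0 < volume (Function.support K ∩ Ioc 0 R) := fun k => by
    rw [intervalIntegral.integral_pos_iff_support_of_nonneg_ae'
      (by rw [uIoc_of_le hR]
          exact ae_restrict_of_forall_mem measurableSet_Ioc fun s hs =>
            mul_nonneg (pow_nonneg hs.1.le k) (hK s))
      (hKi.continuousOn_mul (by fun_prop))]
    congr! 3
    ext s
    simp only [mem_inter_iff, Function.mem_support, mem_Ioc]
    constructor
    · rintro ⟨hs, hs0⟩
      exact ⟨right_ne_zero_of_mul hs, hs0⟩
    · rintro ⟨hs, hs0⟩
      exact ⟨mul_ne_zero (pow_ne_zero k hs0.1.ne') hs, hs0⟩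
  exact (hpos_iff n).mpr ((hpos_iff m).mp hm)

theorem stmt_16_general (d : ℕ) (hd : 1 ≤ d) (R : ℝ) (hR : 0 < R)
    (K : ℝ → ℝ) (hKmeas : Measurable K) (hKnonneg : ∀ s, 0 ≤ K s)
    (hKbdd : ∃ M, ∀ s, K s ≤ M)
    (mK : ℕ → ℝ) (hmK : ∀ j, mK j = ∫ s in (0:ℝ)..R, s ^ (j - 1) * K s)
    (hmKd : 0 < mK d)
    (B : ℕ → ℝ) (hB : ∀ p, B p = mK (d + p) / mK d)
    (c1 c2 c3 : ℝ) (hc1 : c1 = 2 * (d : ℝ)) (hc2 : c2 = 8 * (d : ℝ) ^ 2)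
    (hc3 : c3 = 4 * (d : ℝ) * ((d : ℝ) - 1))
    (F : ℝ → ℝ) (hFcont : ContinuousOn F (Set.Ici 0))
    (τ₁ τ₂ τ₃ : ℝ) (hτ₁ : 0 < τ₁)
    (hF : (fun t => F t - (τ₁ * t + τ₂ * t ^ 2 + τ₃ * t ^ 3))
      =o[𝓝[>] (0:ℝ)] fun t => t ^ 3)
    (IF : ℝ → ℝ)
    (hIF : ∀ h, IF h = (∫ u in (0:ℝ)..R, u ^ (d - 1) * K u * F (h * u)) / mK d)
    (Ψ : ℝ → ℝ)
    (hΨ : ∀ h, Ψ h = c2 * IF h - c3 * IF (Real.sqrt 2 * h) - c1 * IF (2 * h))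
    (φ₂ : ℝ → ℝ)
    (hφ₂ : ∀ a, φ₂ a = c2 * F a - c3 * F (Real.sqrt 2 * a) - c1 * F (2 * a)) :
    Tendsto
      (fun h => (Ψ h - φ₂ ((B 4) ^ ((1:ℝ)/4) * h)) / φ₂ ((B 4) ^ ((1:ℝ)/4) * h))
      (𝓝[>] (0:ℝ)) (𝓝 ((B 1 - (B 4) ^ ((1:ℝ)/4)) / (B 4) ^ ((1:ℝ)/4))) := by
  obtain ⟨M, hM⟩ := hKbdd
  have hKi : IntervalIntegrable K volume 0 R :=
    (intervalIntegrable_const (c := M)).mono_fun' hKmeas.aestronglyMeasurable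
      (ae_of_all _ fun s => (Real.norm_of_nonneg (hKnonneg s)).trans_le (hM s))
  have hF₁ := isLittleO_sub_linear_of_isLittleO_cubic hF
  have hmoment : ∫ u in (0:ℝ)..R, u * (u ^ (d - 1) * K u) = mK (d + 1) := by
    simp only [hmK, ← mul_assoc, ← pow_succ', Nat.sub_add_cancel hd, Nat.add_sub_cancel]
  have hIF₁ : Tendsto (fun h => IF h / h) (𝓝[>] 0) (𝓝 (τ₁ * B 1)) := by
    have hw : IntervalIntegrable (fun u => u ^ (d - 1) * K u) volume 0 R :=
      hKi.continuousOn_mul (by fun_prop)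
    have := (tendsto_integral_mul_comp_div hR.le hw hFcont hF₁).div_const (mK d)
    simpa only [hIF, hB, div_right_comm, hmoment, mul_div_assoc] using this
  have hB4 : 0 < B 4 := by
    rw [hB, hmK]
    exact div_pos (integral_pow_mul_pos hR.le hKnonneg hKi _ (hmK d ▸ hmKd)) hmKd
  set a := B 4 ^ ((1:ℝ)/4)
  have ha : 0 < a := Real.rpow_pos_of_pos hB4 _
  have hΨ₁ : Tendsto (fun h => Ψ h / h) (𝓝[>] 0)
      (𝓝 ((c2 - √2 * c3 - 2 * c1) * (τ₁ * B 1))) := by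
    simpa only [hΨ] using tendsto_combination_div hIF₁ c1 c2 c3
  have hφ₂₁ : Tendsto (fun h => φ₂ (a * h) / h) (𝓝[>] 0)
      (𝓝 ((c2 - √2 * c3 - 2 * c1) * (a * τ₁))) := by
    simpa only [hφ₂, mul_left_comm] using tendsto_combination_div
      (tendsto_comp_const_mul_div ha (tendsto_div_self_of_isLittleO hF₁)) c1 c2 c3
  have hc : 0 < c2 - √2 * c3 - 2 * c1 := by
    subst hc1 hc2 hc3
    exact curvature_coeff_pos (by exact_mod_cast hd)
  convert tendsto_sub_div_of_tendsto_div hΨ₁ hφ₂₁ (by positivity)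
    (eventually_mem_nhdsWithin.mono fun _ h => ne_of_gt h) using 2
  field_simp

/-- Mean relative error of the curvature constraint estimator in the continuous
(non-differentiable) case: the relative bias
`(Ψ_F(h) − φ₂(B₄^{1/4} h)) / φ₂(B₄^{1/4} h)` converges, as `h → 0⁺`, to
`(B₁ − B₄^{1/4}) / B₄^{1/4}`. -/
theorem stmt_16 (d : ℕ) (hd : 1 ≤ d) (R : ℝ) (hR : 0 < R)
    (K : ℝ → ℝ) (hKmeas : Measurable K) (hKnonneg : ∀ s, 0 ≤ K s)
    (hKbdd : ∃ M, ∀ s, K s ≤ M)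
    (hKsupp : ∀ s, R < s → K s = 0)
    (mK : ℕ → ℝ) (hmK : ∀ j, mK j = ∫ s in (0:ℝ)..R, s ^ (j - 1) * K s)
    (hmKd : 0 < mK d)
    (B : ℕ → ℝ) (hB : ∀ p, B p = mK (d + p) / mK d)
    (c1 c2 c3 : ℝ) (hc1 : c1 = 2 * (d : ℝ)) (hc2 : c2 = 8 * (d : ℝ) ^ 2)
    (hc3 : c3 = 4 * (d : ℝ) * ((d : ℝ) - 1))
    (F : ℝ → ℝ) (hFcont : ContinuousOn F (Set.Ici 0))
    (τ₁ τ₂ τ₃ : ℝ) (hτ₁ : 0 < τ₁)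
    (hF : (fun t => F t - (τ₁ * t + τ₂ * t ^ 2 + τ₃ * t ^ 3))
      =o[𝓝[>] (0:ℝ)] fun t => t ^ 3)
    (IF : ℝ → ℝ)
    (hIF : ∀ h, IF h = (∫ u in (0:ℝ)..R, u ^ (d - 1) * K u * F (h * u)) / mK d)
    (Ψ : ℝ → ℝ)
    (hΨ : ∀ h, Ψ h = c2 * IF h - c3 * IF (Real.sqrt 2 * h) - c1 * IF (2 * h))
    (φ₂ : ℝ → ℝ)
    (hφ₂ : ∀ a, φ₂ a = c2 * F a - c3 * F (Real.sqrt 2 * a) - c1 * F (2 * a)) :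
    Tendsto
      (fun h => (Ψ h - φ₂ ((B 4) ^ ((1:ℝ)/4) * h)) / φ₂ ((B 4) ^ ((1:ℝ)/4) * h))
      (𝓝[>] (0:ℝ)) (𝓝 ((B 1 - (B 4) ^ ((1:ℝ)/4)) / (B 4) ^ ((1:ℝ)/4))) :=
  stmt_16_general d hd R hR K hKmeas hKnonneg hKbdd mK hmK hmKd B hB c1 c2 c3 hc1 hc2 hc3 F hFcont
    τ₁ τ₂ τ₃ hτ₁ hF IF hIF Ψ hΨ φ₂ hφ₂
end
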